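/- Let κ ≥ 1 be a constant, d ≥ 1, and let c ∈ ℝ^d be a fixed unit vector. Let v_1, …, v_n be i.i.d. random vectors in ℝ^d, each distributed as v = s·ĝ where ĝ is a standard Gaussian vector in ℝ^d (law N(0, I_d)) and s is a nonnegative random scalar independent of ĝ with s ≤ κ almost surely. Let Z_c = Σ_{w=1}^n exp(⟨v_w, c⟩). Then E[Z_c] ≥ n and Var[Z_c] ≤ exp(8κ²)·n. -/

import Mathlib

open MeasureTheory ProbabilityTheory Real

/-- The standard Gaussian measure `N(0, I_d)` on `ℝ^d`. -/
noncomputable def stdGaussian (d : ℕ) : Measure (EuclideanSpace ℝ (Fin d)) :=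
  (Measure.pi fun _ : Fin d => gaussianReal 0 1).map
    (EuclideanSpace.equiv (Fin d) ℝ).symm

/-- The uniform (rotation-invariant) probability distribution on the unit sphere
`S^{d-1}` of `ℝ^d`, realized as the law of `g / ‖g‖` for a standard Gaussian `g`. -/
noncomputable def uniformSphere (d : ℕ) : Measure (EuclideanSpace ℝ (Fin d)) :=
  (stdGaussian d).map (fun x => ‖x‖⁻¹ • x)

/-!
Since `⟨g, c⟩` is a standard normal variable independent of `s`, conditioning on `s` gives
`E[exp (t s ⟨g, c⟩)] = E[exp (t² s² / 2)]`, which lies in `[1, exp (t² κ² / 2)]` when `|s| ≤ κ`.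
With `t = 1` this bounds the mean of each summand of `Z_c` from below by `1`; with `t = 2` it
bounds the second moment, hence the variance, by `exp (2 κ²)`. Pairwise independence makes
the variances add up.
-/

open scoped RealInnerProductSpace NNReal ENNReal

lemma stdGaussian_eq_stdGaussian_euclideanSpace (d : ℕ) :
    _root_.stdGaussian d = ProbabilityTheory.stdGaussian (EuclideanSpace ℝ (Fin d)) :=
  map_pi_eq_stdGaussian

lemma map_inner_stdGaussian {E : Type*} [NormedAddCommGroup E] [InnerProductSpace ℝ E]
    [FiniteDimensional ℝ E] [MeasurableSpace E] [BorelSpace E] (c : E) :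
    (ProbabilityTheory.stdGaussian E).map (fun x ↦ ⟪x, c⟫) = gaussianReal 0 (‖c‖₊ ^ 2) := by
  have h := IsGaussian.map_eq_gaussianReal (μ := ProbabilityTheory.stdGaussian E) (innerSL ℝ c)
  simp only [integral_strongDual_stdGaussian, variance_dual_stdGaussian, innerSL_apply_norm] at h
  convert h using 2
  · ext x
    simp [real_inner_comm]
  · ext
    simp

lemma integral_exp_mul_gaussianReal (σ2 : ℝ≥0) (a : ℝ) :
    ∫ y, rexp (a * y) ∂gaussianReal 0 σ2 = rexp (σ2 * a ^ 2 / 2) := by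
  simpa [mgf] using congrFun (mgf_id_gaussianReal (μ := 0) (v := σ2)) a

lemma exp_mul_sq_le_of_abs_le (σ2 : ℝ≥0) (t : ℝ) {x κ : ℝ} (h : |x| ≤ κ) :
    rexp (σ2 * (t * x) ^ 2 / 2) ≤ rexp (σ2 * (t * κ) ^ 2 / 2) := by
  rw [Real.exp_le_exp, mul_pow, mul_pow]
  gcongr σ2 * (t ^ 2 * ?_) / 2
  exact sq_le_sq' (abs_le.1 h).1 (abs_le.1 h).2

section IdentDistrib

variable {Ω ι : Type*} [MeasurableSpace Ω] {P : Measure Ω} [Fintype ι]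
  {X : ι → Ω → ℝ} {W : Ω → ℝ}

lemma integral_sum_of_identDistrib (hX : ∀ i, IdentDistrib (X i) W P P)
    (hW : Integrable W P) :
    ∫ ω, ∑ i, X i ω ∂P = Fintype.card ι * ∫ ω, W ω ∂P := by
  rw [integral_finsetSum _ fun i _ ↦ (hX i).integrable_iff.2 hW]
  simp [fun i ↦ (hX i).integral_eq]

lemma variance_sum_of_identDistrib [IsProbabilityMeasure P]
    (hX : ∀ i, IdentDistrib (X i) W P P) (hindep : Pairwise fun i j ↦ X i ⟂ᵢ[P] X j)
    (hW : MemLp W 2 P) :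
    Var[fun ω ↦ ∑ i, X i ω; P] = Fintype.card ι * Var[W; P] := by
  rw [← Finset.sum_fn, IndepFun.variance_sum (fun i _ ↦ (hX i).memLp_iff.2 hW)
    fun i _ j _ hij ↦ hindep hij]
  simp [fun i ↦ (hX i).variance_eq]

end IdentDistrib

section ScaleMixture

variable {Ω : Type*} [MeasurableSpace Ω] {P : Measure Ω} [IsProbabilityMeasure P]
  {s Y : Ω → ℝ} {σ2 : ℝ≥0}

lemma lintegral_exp_mul_mul_of_indepFun (hs : AEMeasurable s P) (hY : AEMeasurable Y P)
    (hind : IndepFun s Y P) (hYlaw : P.map Y = gaussianReal 0 σ2) (t : ℝ) :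
    ∫⁻ ω, ENNReal.ofReal (rexp (t * (s ω * Y ω))) ∂P
      = ∫⁻ ω, ENNReal.ofReal (rexp (σ2 * (t * s ω) ^ 2 / 2)) ∂P := by
  have hjoint : P.map (fun ω ↦ (s ω, Y ω)) = (P.map s).prod (gaussianReal 0 σ2) := by
    rw [← hYlaw]
    exact (indepFun_iff_map_prod_eq_prod_map_map hs hY).mp hind
  have hF : Measurable fun p : ℝ × ℝ ↦ ENNReal.ofReal (rexp (t * (p.1 * p.2))) := by fun_prop
  calc ∫⁻ ω, ENNReal.ofReal (rexp (t * (s ω * Y ω))) ∂P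
      = ∫⁻ p, ENNReal.ofReal (rexp (t * (p.1 * p.2))) ∂(P.map s).prod (gaussianReal 0 σ2) := by
        rw [← hjoint, lintegral_map' hF.aemeasurable (hs.prodMk hY)]
    _ = ∫⁻ b, ENNReal.ofReal (rexp (σ2 * (t * b) ^ 2 / 2)) ∂P.map s := by
        rw [lintegral_prod _ hF.aemeasurable]
        refine lintegral_congr fun b ↦ ?_
        simp_rw [← mul_assoc]
        rw [← ofReal_integral_eq_lintegral_ofReal (integrable_exp_mul_gaussianReal _)
          (ae_of_all _ fun y ↦ (Real.exp_pos _).le), integral_exp_mul_gaussianReal]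
    _ = _ := lintegral_map' (by fun_prop) hs

lemma integral_exp_mul_mul_of_indepFun (hs : AEMeasurable s P) (hY : AEMeasurable Y P)
    (hind : IndepFun s Y P) (hYlaw : P.map Y = gaussianReal 0 σ2) (t : ℝ) :
    ∫ ω, rexp (t * (s ω * Y ω)) ∂P = ∫ ω, rexp (σ2 * (t * s ω) ^ 2 / 2) ∂P := by
  rw [integral_eq_lintegral_of_nonneg_ae, integral_eq_lintegral_of_nonneg_ae,
    lintegral_exp_mul_mul_of_indepFun hs hY hind hYlaw]
  all_goals first
    | exact ae_of_all _ fun ω ↦ (Real.exp_pos _).le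
    | exact (by fun_prop : AEMeasurable _ P).aestronglyMeasurable

lemma integrable_exp_mul_mul_iff_of_indepFun (hs : AEMeasurable s P) (hY : AEMeasurable Y P)
    (hind : IndepFun s Y P) (hYlaw : P.map Y = gaussianReal 0 σ2) (t : ℝ) :
    Integrable (fun ω ↦ rexp (t * (s ω * Y ω))) P
      ↔ Integrable (fun ω ↦ rexp (σ2 * (t * s ω) ^ 2 / 2)) P := by
  rw [← lintegral_ofReal_ne_top_iff_integrable, ← lintegral_ofReal_ne_top_iff_integrable,
    lintegral_exp_mul_mul_of_indepFun hs hY hind hYlaw]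
  all_goals first
    | exact ae_of_all _ fun ω ↦ (Real.exp_pos _).le
    | exact (by fun_prop : AEMeasurable _ P).aestronglyMeasurable

variable {κ : ℝ}

lemma integrable_exp_mul_sq_of_abs_le (hs : AEMeasurable s P) (hbd : ∀ᵐ ω ∂P, |s ω| ≤ κ)
    (t : ℝ) : Integrable (fun ω ↦ rexp (σ2 * (t * s ω) ^ 2 / 2)) P := by
  refine .of_bound (by fun_prop) (rexp (σ2 * (t * κ) ^ 2 / 2)) (hbd.mono fun ω hω ↦ ?_)
  rw [Real.norm_of_nonneg (Real.exp_pos _).le]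
  exact exp_mul_sq_le_of_abs_le σ2 t hω

variable (hs : AEMeasurable s P) (hY : AEMeasurable Y P) (hind : IndepFun s Y P)
  (hYlaw : P.map Y = gaussianReal 0 σ2) (hbd : ∀ᵐ ω ∂P, |s ω| ≤ κ)
include hs hY hind hYlaw hbd

lemma integrable_exp_mul_mul_of_abs_le (t : ℝ) :
    Integrable (fun ω ↦ rexp (t * (s ω * Y ω))) P :=
  (integrable_exp_mul_mul_iff_of_indepFun hs hY hind hYlaw t).2
    (integrable_exp_mul_sq_of_abs_le hs hbd t)

lemma one_le_integral_exp_mul_mul_of_abs_le (t : ℝ) :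
    1 ≤ ∫ ω, rexp (t * (s ω * Y ω)) ∂P := by
  rw [integral_exp_mul_mul_of_indepFun hs hY hind hYlaw]
  calc (1 : ℝ) = ∫ _, 1 ∂P := by simp
    _ ≤ _ := integral_mono (integrable_const 1) (integrable_exp_mul_sq_of_abs_le hs hbd t)
        fun ω ↦ Real.one_le_exp (by positivity)

lemma integral_exp_mul_mul_le_of_abs_le (t : ℝ) :
    ∫ ω, rexp (t * (s ω * Y ω)) ∂P ≤ rexp (σ2 * (t * κ) ^ 2 / 2) := by
  rw [integral_exp_mul_mul_of_indepFun hs hY hind hYlaw]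
  calc _ ≤ ∫ _, rexp (σ2 * (t * κ) ^ 2 / 2) ∂P :=
        integral_mono_ae (integrable_exp_mul_sq_of_abs_le hs hbd t) (integrable_const _)
          (hbd.mono fun ω ↦ exp_mul_sq_le_of_abs_le σ2 t)
    _ = _ := by simp

lemma memLp_exp_mul_of_abs_le : MemLp (fun ω ↦ rexp (s ω * Y ω)) 2 P := by
  refine (memLp_two_iff_integrable_sq (by fun_prop)).2 ?_
  simpa only [← Real.exp_nat_mul, Nat.cast_ofNat] using
    integrable_exp_mul_mul_of_abs_le hs hY hind hYlaw hbd 2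

lemma variance_exp_mul_le_of_abs_le :
    Var[fun ω ↦ rexp (s ω * Y ω); P] ≤ rexp (σ2 * (2 * κ) ^ 2 / 2) := by
  refine (variance_le_expectation_sq (by fun_prop)).trans ?_
  simpa only [Pi.pow_apply, ← Real.exp_nat_mul, Nat.cast_ofNat] using
    integral_exp_mul_mul_le_of_abs_le hs hY hind hYlaw hbd 2

end ScaleMixture

lemma map_inner_eq_gaussianReal {Ω : Type*} [MeasurableSpace Ω] {P : Measure Ω} {d : ℕ}
    {g : Ω → EuclideanSpace ℝ (Fin d)} (hg : Measurable g)
    (hglaw : P.map g = _root_.stdGaussian d) {c : EuclideanSpace ℝ (Fin d)} (hc : ‖c‖ = 1) :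
    P.map (fun ω ↦ ⟪g ω, c⟫) = gaussianReal 0 1 := by
  rw [show (fun ω ↦ ⟪g ω, c⟫) = (fun x ↦ ⟪x, c⟫) ∘ g from rfl,
    ← Measure.map_map (by fun_prop) hg, hglaw, stdGaussian_eq_stdGaussian_euclideanSpace,
    map_inner_stdGaussian]
  congr
  ext
  simp [hc]

theorem stmt12_general (κ : ℝ) (d n : ℕ)
    (c : EuclideanSpace ℝ (Fin d)) (hc : ‖c‖ = 1)
    (Ω : Type*) [MeasurableSpace Ω] (P : Measure Ω) [IsProbabilityMeasure P]
    (s : Ω → ℝ) (g : Ω → EuclideanSpace ℝ (Fin d))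
    (hs : Measurable s) (hg : Measurable g)
    (hindep : IndepFun s g P)
    (hglaw : Measure.map g P = stdGaussian d)
    (hsbd : ∀ᵐ ω ∂P, 0 ≤ s ω ∧ s ω ≤ κ)
    (v : Fin n → Ω → EuclideanSpace ℝ (Fin d))
    (hvmeas : ∀ w, Measurable (v w))
    (hiid : iIndepFun v P)
    (hvlaw : ∀ w, Measure.map (v w) P = Measure.map (fun ω => s ω • g ω) P) :
    ((n : ℝ) ≤ ∫ ω, ∑ w, Real.exp (inner ℝ (v w ω) c) ∂P) ∧
    variance (fun ω => ∑ w, Real.exp (inner ℝ (v w ω) c)) P ≤ Real.exp (8 * κ ^ 2) * n := by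
  set Y : Ω → ℝ := fun ω ↦ ⟪g ω, c⟫
  have hY : AEMeasurable Y P := by fun_prop
  have hYlaw : P.map Y = gaussianReal 0 1 := map_inner_eq_gaussianReal hg hglaw hc
  have hind : IndepFun s Y P :=
    hindep.comp measurable_id (by fun_prop : Measurable fun x ↦ ⟪x, c⟫)
  have hbd : ∀ᵐ ω ∂P, |s ω| ≤ κ := hsbd.mono fun ω h ↦ abs_le.2 ⟨by linarith [h.1, h.2], h.2⟩
  have hident (w : Fin n) :
      IdentDistrib (fun ω ↦ rexp ⟪v w ω, c⟫) (fun ω ↦ rexp (s ω * Y ω)) P P := by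
    have h := (IdentDistrib.mk (hvmeas w).aemeasurable (hs.smul hg).aemeasurable
      (hvlaw w)).comp (u := fun x ↦ rexp ⟪x, c⟫) (by fun_prop)
    simpa [Function.comp_def, Y, real_inner_smul_left] using h
  have hpair : Pairwise fun i j ↦ (fun ω ↦ rexp ⟪v i ω, c⟫) ⟂ᵢ[P] (fun ω ↦ rexp ⟪v j ω, c⟫) :=
    fun _ _ hij ↦ (hiid.comp (fun _ x ↦ rexp ⟪x, c⟫) fun _ ↦ by fun_prop).indepFun hij
  have hmean := one_le_integral_exp_mul_mul_of_abs_le hs.aemeasurable hY hind hYlaw hbd 1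
  have hint := integrable_exp_mul_mul_of_abs_le hs.aemeasurable hY hind hYlaw hbd 1
  simp only [one_mul] at hmean hint
  constructor
  · rw [integral_sum_of_identDistrib hident hint, Fintype.card_fin]
    exact le_mul_of_one_le_right n.cast_nonneg hmean
  · rw [variance_sum_of_identDistrib hident hpair
      (memLp_exp_mul_of_abs_le hs.aemeasurable hY hind hYlaw hbd), Fintype.card_fin, mul_comm]
    gcongr
    refine (variance_exp_mul_le_of_abs_le hs.aemeasurable hY hind hYlaw hbd).trans ?_
    gcongr
    push_cast
    nlinarith [sq_nonneg κ]

/-- Lemma A.5 of the paper (mean and variance of the partition function):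
for a fixed unit vector `c` and i.i.d. word vectors `v_1, …, v_n`, each
distributed as `s • ĝ` with `ĝ` standard Gaussian in `ℝ^d` and `s` a
nonnegative scalar with `s ≤ κ` a.s., independent of `ĝ`, the partition
function `Z_c = ∑ w, exp ⟨v_w, c⟩` satisfies `E[Z_c] ≥ n` and
`Var[Z_c] ≤ exp (8 κ²) · n`. -/
theorem stmt12 (κ : ℝ) (hκ : 1 ≤ κ) (d n : ℕ) (hd : 1 ≤ d)
    (c : EuclideanSpace ℝ (Fin d)) (hc : ‖c‖ = 1)
    (Ω : Type*) [MeasurableSpace Ω] (P : Measure Ω) [IsProbabilityMeasure P]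
    (s : Ω → ℝ) (g : Ω → EuclideanSpace ℝ (Fin d))
    (hs : Measurable s) (hg : Measurable g)
    (hindep : IndepFun s g P)
    (hglaw : Measure.map g P = stdGaussian d)
    (hsbd : ∀ᵐ ω ∂P, 0 ≤ s ω ∧ s ω ≤ κ)
    (v : Fin n → Ω → EuclideanSpace ℝ (Fin d))
    (hvmeas : ∀ w, Measurable (v w))
    (hiid : iIndepFun v P)
    (hvlaw : ∀ w, Measure.map (v w) P = Measure.map (fun ω => s ω • g ω) P) :
    ((n : ℝ) ≤ ∫ ω, ∑ w, Real.exp (inner ℝ (v w ω) c) ∂P) ∧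
    variance (fun ω => ∑ w, Real.exp (inner ℝ (v w ω) c)) P ≤ Real.exp (8 * κ ^ 2) * n :=
  stmt12_general κ d n c hc Ω P s g hs hg hindep hglaw hsbd v hvmeas hiid hvlaw
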